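/- arXiv:2311.06392 — 6 statements merged into one kernel-verified Lean document; each statement's English description precedes it below -/
import Mathlib

section
/- Let 0 < c ≤ 1 and let (λ_{i,j})_{(i,j)∈ℤ×ℤ} be a family of complex numbers such that ∑_{i,j∈ℤ} |λ_{i,j}|² ≤ 1 and ∑_{i∈ℤ} |λ_{i,0}|² ≥ c². Then ∑_{i,j∈ℤ} |λ_{i,j} − λ_{i,j+1}|² ≥ c⁴/(3 + 18c²). -/
/-!
A discrete analogue of `f(0)² ≤ ‖f‖₂ ‖f'‖₂` on `ℝ`. Along a row `x_j = λ_{i,j}`, which is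
square-summable and hence tends to `0` at `±∞`, telescoping `|x_j|² - |x_{j+1}|²` in both
directions and using `|a|² - |b|² ≤ |a - b| (|a| + |b|)` gives
`2 |x_0|² ≤ ∑_j |x_j - x_{j+1}| (|x_j| + |x_{j+1}|)`. Summing over `i` and applying Cauchy–Schwarz
yields `(∑_i |λ_{i,0}|²)² ≤ (∑ |λ_{i,j}|²) (∑ |λ_{i,j} - λ_{i,j+1}|²)`, so the difference sum is
at least `c⁴ ≥ c⁴ / (3 + 18 c²)`.
-/

open scoped ENNReal
open Finset Filter Topology

namespace ENNReal

theorem tsum_mul_sq_le_sq_mul_sq {ι : Type*} (f g : ι → ℝ≥0∞) :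
    (∑' i, f i * g i) ^ 2 ≤ (∑' i, f i ^ 2) * ∑' i, g i ^ 2 := by
  have holder : ∑' i, f i * g i ≤
      (∑' i, f i ^ (2 : ℝ)) ^ (1 / 2 : ℝ) * (∑' i, g i ^ (2 : ℝ)) ^ (1 / 2 : ℝ) := by
    refine ENNReal.summable.tsum_le_of_sum_le fun s => ?_
    grw [inner_le_Lp_mul_Lq s f g Real.HolderConjugate.two_two, ENNReal.sum_le_tsum s,
      ENNReal.sum_le_tsum s]
  grw [holder]
  simp only [ENNReal.rpow_two, mul_pow, ← ENNReal.rpow_natCast, ← ENNReal.rpow_mul]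
  norm_num

theorem le_tsum_of_le_add_of_tendsto_zero {u v : ℕ → ℝ≥0∞} (hu : Tendsto u atTop (𝓝 0))
    (h : ∀ n, u n ≤ u (n + 1) + v n) : u 0 ≤ ∑' n, v n := by
  have telescope : ∀ n, u 0 ≤ u n + ∑ k ∈ range n, v k := by
    intro n
    induction n with
    | zero => simp
    | succ n ih =>
      calc u 0 ≤ u n + ∑ k ∈ range n, v k := ih
        _ ≤ u (n + 1) + v n + ∑ k ∈ range n, v k := by grw [h n]
        _ = u (n + 1) + ∑ k ∈ range (n + 1), v k := by rw [sum_range_succ]; ring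
  refine ge_of_tendsto (by simpa using hu.add_const (∑' n, v n)) (Eventually.of_forall fun n => ?_)
  grw [telescope n, ENNReal.sum_le_tsum]

end ENNReal

section

variable {E : Type*} [SeminormedAddCommGroup E]

theorem nnnorm_sq_le_nnnorm_sq_add (x y : E) :
    (‖x‖₊ : ℝ≥0∞) ^ 2 ≤ (‖y‖₊ : ℝ≥0∞) ^ 2 + ‖x - y‖₊ * (‖x‖₊ + ‖y‖₊) := by
  have h : ‖x‖₊ ^ 2 ≤ ‖y‖₊ ^ 2 + ‖x - y‖₊ * (‖x‖₊ + ‖y‖₊) := by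
    rw [← NNReal.coe_le_coe]
    push_cast
    nlinarith [norm_sub_norm_le x y, norm_nonneg x, norm_nonneg y]
  exact_mod_cast h

theorem two_mul_nnnorm_sq_le_tsum {f : ℤ → E} (hf : ∑' j, (‖f j‖₊ : ℝ≥0∞) ^ 2 ≠ ∞) :
    2 * (‖f 0‖₊ : ℝ≥0∞) ^ 2 ≤ ∑' j, (‖f j - f (j + 1)‖₊ : ℝ≥0∞) * (‖f j‖₊ + ‖f (j + 1)‖₊) := by
  have hlim := ENNReal.tendsto_cofinite_zero_of_tsum_ne_top hf
  have hpos : Tendsto (fun n : ℕ => (n : ℤ)) atTop cofinite :=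
    Nat.cofinite_eq_atTop ▸ Nat.cast_injective.tendsto_cofinite
  have hneg : Tendsto (fun n : ℕ => -(n : ℤ)) atTop cofinite :=
    Nat.cofinite_eq_atTop ▸ (neg_injective.comp Nat.cast_injective).tendsto_cofinite
  rw [tsum_of_nat_of_neg_add_one ENNReal.summable ENNReal.summable, two_mul]
  gcongr
  · exact ENNReal.le_tsum_of_le_add_of_tendsto_zero (hlim.comp hpos) fun n => by
      simpa using nnnorm_sq_le_nnnorm_sq_add (f n) (f (n + 1))
  · refine ENNReal.le_tsum_of_le_add_of_tendsto_zero (u := fun n : ℕ => (‖f (-n)‖₊ : ℝ≥0∞) ^ 2)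
      (hlim.comp hneg) fun n => ?_
    have hshift : -((n : ℤ) + 1) + 1 = -n := by ring
    have hsymm : ‖f (-n) - f (-(n + 1))‖₊ = ‖f (-(n + 1)) - f (-n)‖₊ :=
      NNReal.eq (norm_sub_rev _ _)
    rw [hshift, ← hsymm, add_comm (‖f (-((n : ℤ) + 1))‖₊ : ℝ≥0∞)]
    exact nnnorm_sq_le_nnnorm_sq_add _ _

theorem sq_tsum_nnnorm_sq_le_mul {ι : Type*} (lam : ι → ℤ → E)
    (h : ∑' (i) (j), (‖lam i j‖₊ : ℝ≥0∞) ^ 2 ≠ ∞) :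
    (∑' i, (‖lam i 0‖₊ : ℝ≥0∞) ^ 2) ^ 2 ≤
      (∑' (i) (j), (‖lam i j‖₊ : ℝ≥0∞) ^ 2) *
        ∑' (i) (j), (‖lam i j - lam i (j + 1)‖₊ : ℝ≥0∞) ^ 2 := by
  set S := ∑' (i) (j), (‖lam i j‖₊ : ℝ≥0∞) ^ 2
  set D := ∑' (i) (j), (‖lam i j - lam i (j + 1)‖₊ : ℝ≥0∞) ^ 2
  set d : ι × ℤ → ℝ≥0∞ := fun p => ‖lam p.1 p.2 - lam p.1 (p.2 + 1)‖₊
  set b : ι × ℤ → ℝ≥0∞ := fun p => ‖lam p.1 p.2‖₊ + ‖lam p.1 (p.2 + 1)‖₊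
  have htelescope : 2 * ∑' i, (‖lam i 0‖₊ : ℝ≥0∞) ^ 2 ≤ ∑' p, d p * b p := by
    rw [← ENNReal.tsum_mul_left, ENNReal.tsum_prod']
    exact ENNReal.tsum_le_tsum fun i =>
      two_mul_nnnorm_sq_le_tsum (ne_top_of_le_ne_top h (ENNReal.le_tsum i))
  have hD : ∑' p, d p ^ 2 = D := ENNReal.tsum_prod'
  have hb : ∑' p, b p ^ 2 ≤ 4 * S := by
    have hshift : ∀ i, ∑' j, (‖lam i (j + 1)‖₊ : ℝ≥0∞) ^ 2 = ∑' j, (‖lam i j‖₊ : ℝ≥0∞) ^ 2 :=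
      fun i => (Equiv.addRight 1).tsum_eq fun j => (‖lam i j‖₊ : ℝ≥0∞) ^ 2
    calc ∑' p, b p ^ 2
        ≤ ∑' (i) (j), 2 * ((‖lam i j‖₊ : ℝ≥0∞) ^ 2 + (‖lam i (j + 1)‖₊ : ℝ≥0∞) ^ 2) := by
          rw [ENNReal.tsum_prod']
          gcongr with i j
          simp only [b]
          exact_mod_cast (add_sq_le : (‖lam i j‖₊ + ‖lam i (j + 1)‖₊) ^ 2 ≤ _)
      _ = 4 * S := by
          simp only [ENNReal.tsum_mul_left, ENNReal.tsum_add, hshift]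
          rw [← two_mul, ← mul_assoc]
          norm_num [S]
  have h4 : 4 * (∑' i, (‖lam i 0‖₊ : ℝ≥0∞) ^ 2) ^ 2 ≤ 4 * (S * D) := by
    calc 4 * (∑' i, (‖lam i 0‖₊ : ℝ≥0∞) ^ 2) ^ 2
        = (2 * ∑' i, (‖lam i 0‖₊ : ℝ≥0∞) ^ 2) ^ 2 := by ring
      _ ≤ D * (4 * S) := by grw [htelescope, ENNReal.tsum_mul_sq_le_sq_mul_sq, hD, hb]
      _ = 4 * (S * D) := by ring
  exact (ENNReal.mul_le_mul_iff_right (by norm_num) (by norm_num)).1 h4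

end

theorem stmt0_general (c : ℝ) (lam : ℤ → ℤ → ℂ)
    (h1 : ∑' (i : ℤ) (j : ℤ), (‖lam i j‖₊ : ℝ≥0∞) ^ 2 ≤ 1)
    (h2 : ENNReal.ofReal (c ^ 2) ≤ ∑' (i : ℤ), (‖lam i 0‖₊ : ℝ≥0∞) ^ 2) :
    ENNReal.ofReal (c ^ 4 / (3 + 18 * c ^ 2)) ≤
      ∑' (i : ℤ) (j : ℤ), (‖lam i j - lam i (j + 1)‖₊ : ℝ≥0∞) ^ 2 := by
  have hc4 : c ^ 4 / (3 + 18 * c ^ 2) ≤ c ^ 4 :=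
    div_le_self (by positivity) (by linarith [sq_nonneg c])
  calc ENNReal.ofReal (c ^ 4 / (3 + 18 * c ^ 2))
      ≤ ENNReal.ofReal (c ^ 2) ^ 2 := by
        rw [← ENNReal.ofReal_pow (sq_nonneg c), ← pow_mul]
        exact ENNReal.ofReal_le_ofReal hc4
    _ ≤ (∑' i, (‖lam i 0‖₊ : ℝ≥0∞) ^ 2) ^ 2 := by gcongr
    _ ≤ (∑' (i) (j), (‖lam i j‖₊ : ℝ≥0∞) ^ 2) *
          ∑' (i) (j), (‖lam i j - lam i (j + 1)‖₊ : ℝ≥0∞) ^ 2 :=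
        sq_tsum_nnnorm_sq_le_mul lam (ne_top_of_le_ne_top ENNReal.one_ne_top h1)
    _ ≤ ∑' (i) (j), (‖lam i j - lam i (j + 1)‖₊ : ℝ≥0∞) ^ 2 := by grw [h1, one_mul]

/-- Lemma 6.2 of the paper: key real-analytic lower bound. -/
theorem stmt0 (c : ℝ) (hc0 : 0 < c) (hc1 : c ≤ 1) (lam : ℤ → ℤ → ℂ)
    (h1 : ∑' (i : ℤ) (j : ℤ), (‖lam i j‖₊ : ℝ≥0∞) ^ 2 ≤ 1)
    (h2 : ENNReal.ofReal (c ^ 2) ≤ ∑' (i : ℤ), (‖lam i 0‖₊ : ℝ≥0∞) ^ 2) :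
    ENNReal.ofReal (c ^ 4 / (3 + 18 * c ^ 2)) ≤
      ∑' (i : ℤ) (j : ℤ), (‖lam i j - lam i (j + 1)‖₊ : ℝ≥0∞) ^ 2 :=
  stmt0_general c lam h1 h2
end

section
/- Let 0 < c ≤ 1 and let (v_j)_{j∈ℤ} be a family of elements of the Hilbert space ℓ²(ℤ;ℂ) such that ∑_{j∈ℤ} ‖v_j‖² ≤ 1 and ‖v_0‖ ≥ c. Then ∑_{j∈ℤ} ‖v_j − v_{j+1}‖² ≥ c⁴/(3 + 18c²), where the sum on the left is interpreted as a value in [0,∞]. -/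
open scoped ENNReal
open Finset

private lemma sqrt_step (n : ℕ) :
    (Real.sqrt (n+1) + Real.sqrt n)/2 ≤ (2/3) * (((n:ℝ)+1) * Real.sqrt (n+1) - n * Real.sqrt n) := by
  set a := Real.sqrt (n+1) with ha
  set b := Real.sqrt n with hb
  have ha2 : a^2 = (n:ℝ)+1 := Real.sq_sqrt (by positivity)
  have hb2 : b^2 = (n:ℝ) := Real.sq_sqrt (by positivity)
  have ha0 : 0 ≤ a := Real.sqrt_nonneg _
  have hb0 : 0 ≤ b := Real.sqrt_nonneg _
  have ha1 : 1 ≤ a := by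
    rw [ha]
    nth_rewrite 1 [show (1:ℝ) = Real.sqrt 1 from (Real.sqrt_one).symm]
    exact Real.sqrt_le_sqrt (by linarith [Nat.cast_nonneg (α := ℝ) n])
  have hd : a^2 - b^2 = 1 := by rw [ha2, hb2]; ring
  have hab : (a-b)*(a+b) = 1 := by linear_combination hd
  have hrw : (n:ℝ)+1 = a^2 := ha2.symm
  have hrwb : (n:ℝ) = b^2 := hb2.symm
  rw [hrw, hrwb]
  nlinarith [hab, sq_nonneg (a-b), mul_pos (by linarith : (0:ℝ) < a)
    (by linarith : (0:ℝ) < a + b), sq_nonneg (a+b)]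

private lemma sqrt_sum_bound (N : ℕ) :
    ∑ k ∈ range (N+1), Real.sqrt k ≤ (2/3)*(N:ℝ)*Real.sqrt N + Real.sqrt N / 2 := by
  induction N with
  | zero => simp
  | succ n ih =>
      rw [Finset.sum_range_succ]
      have := sqrt_step n
      push_cast
      push_cast at ih this
      linarith

private lemma endgameA (c t x : ℝ) (hc0 : 0 < c) (hc1 : c ≤ 1) (ht : 0 < t)
    (hx0 : 0 ≤ x) (hxc : x ≤ c)
    (hx2 : c^2 - t^2 ≤ x^2)
    (h3 : t^2 * (3 + 18*c^2) < c^4)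
    (hf : x^4 - (8/3)*c*x^3 + 2*c^2*x^2 ≤ t^2) : False := by
  have hw : c*(c - x) ≤ t^2 := by nlinarith
  have hw0 : 0 ≤ c - x := by linarith
  have hfx : c^4/3 - (4/3)*c*(c-x)^3 + (c-x)^4 = x^4 - (8/3)*c*x^3 + 2*c^2*x^2 := by ring
  have h1 : c^4/3 - (4/3)*c*(c-x)^3 ≤ t^2 := by nlinarith [pow_nonneg hw0 4]
  have h2 : c^3*(c-x)^3 ≤ t^6 := by
    calc c^3*(c-x)^3 = (c*(c-x))^3 := by ring
    _ ≤ (t^2)^3 := pow_le_pow_left₀ (by positivity) hw 3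
    _ = t^6 := by ring
  have ht2 : t^2 < c^2/3 := by nlinarith
  have ht6 : t^6 ≤ t^2*(c^4/9) := by nlinarith [sq_nonneg t, sq_nonneg (t^2), sq_nonneg c]
  have h1c := mul_le_mul_of_nonneg_left h1 (sq_nonneg c)
  have h3c := mul_lt_mul_of_pos_left h3 (by positivity : (0:ℝ) < c^2)
  have hc4t2 : 0 < c^4*t^2 := by positivity
  nlinarith [h1c, h2, h3c, ht6, hc4t2]

private lemma endgameB (c t u Q : ℝ) (hc0 : 0 < c) (hc1 : c ≤ 1) (ht : 0 < t) (hu0 : 0 ≤ u)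
    (hx : t^2*u^2 ≤ c^2) (hr1 : c^2 < t^2*(u^2+1)) (h3 : t^2*(3+18*c^2) < c^4)
    (hQ0 : 0 ≤ Q) (hQ : Q ≤ (2/3)*u^2*u + u/2)
    (hmain : 2*((u^2+1)*c^2 - 2*c*t*Q + t^2*(u^2*(u^2+1)/2)) - c^2 ≤ 1) : False := by
  have h4 : 4*c*t*Q ≤ 4*c*t*((2/3)*u^2*u + u/2) := by
    have := mul_le_mul_of_nonneg_left hQ (by positivity : (0:ℝ) ≤ 4*c*t)
    linarith
  have key : u^2*(2*c^2 - (8/3)*c*(t*u) + (t*u)^2) + (c - t*u)^2 ≤ 1 := by nlinarith [hmain, h4]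
  have key2 : u^2*(2*c^2 - (8/3)*c*(t*u) + (t*u)^2) ≤ 1 := by nlinarith [sq_nonneg (c - t*u)]
  have key3 := mul_le_mul_of_nonneg_left key2 (sq_nonneg t)
  have hf : (t*u)^4 - (8/3)*c*(t*u)^3 + 2*c^2*(t*u)^2 ≤ t^2 := by nlinarith [key3]
  have hxc : t*u ≤ c := by nlinarith [hx, mul_pos hc0 hc0, sq_nonneg (t*u + c), mul_nonneg ht.le hu0]
  exact endgameA c t (t*u) hc0 hc1 ht (by positivity) hxc (by nlinarith [hr1]) h3 hf

private lemma sum_Icc_abs (G : ℕ → ℝ) (N : ℕ) :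
    ∑ j ∈ Finset.Icc (-(N:ℤ)) N, G j.natAbs = 2 * ∑ k ∈ range (N+1), G k - G 0 := by
  induction N with
  | zero => simp; ring
  | succ n ih =>
      have hins : Finset.Icc (-(n+1:ℤ)) (n+1) =
          insert (-(n+1:ℤ)) (insert ((n+1:ℤ)) (Finset.Icc (-(n:ℤ)) n)) := by
        ext j; simp only [Finset.mem_Icc, Finset.mem_insert]; omega
      push_cast
      rw [hins, Finset.sum_insert (by simp only [Finset.mem_insert, Finset.mem_Icc]; omega),
        Finset.sum_insert (by simp only [Finset.mem_Icc]; omega), Finset.sum_range_succ]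
      have e1 : (-(↑n + 1) : ℤ).natAbs = n + 1 := by omega
      have e2 : ((↑n + 1 : ℤ)).natAbs = n + 1 := by omega
      push_cast at ih
      rw [e1, e2, ih]
      ring

/-- Vector reformulation of Lemma 6.2: lower bound for families in ℓ²(ℤ;ℂ). -/
theorem stmt1 (c : ℝ) (hc0 : 0 < c) (hc1 : c ≤ 1)
    (v : ℤ → lp (fun _ : ℤ => ℂ) 2)
    (h1 : ∑' (j : ℤ), (‖v j‖₊ : ℝ≥0∞) ^ 2 ≤ 1)
    (h2 : c ≤ ‖v 0‖) :
    ENNReal.ofReal (c ^ 4 / (3 + 18 * c ^ 2)) ≤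
      ∑' (j : ℤ), (‖v j - v (j + 1)‖₊ : ℝ≥0∞) ^ 2 := by
  by_contra hcon
  push_neg at hcon
  set S := ∑' (j : ℤ), (‖v j - v (j + 1)‖₊ : ℝ≥0∞) ^ 2 with hS
  have hτ : (0:ℝ) < c ^ 4 / (3 + 18 * c ^ 2) := by positivity
  have hSfin : S ≠ ⊤ := hcon.ne_top
  have hSr : S.toReal < c ^ 4 / (3 + 18 * c ^ 2) := ENNReal.toReal_lt_of_lt_ofReal hcon
  set s : ℝ := (S.toReal + c ^ 4 / (3 + 18 * c ^ 2)) / 2 with hs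
  have hs0 : 0 < s := by
    have := ENNReal.toReal_nonneg (a := S); positivity
  have hsτ : s < c ^ 4 / (3 + 18 * c ^ 2) := by rw [hs]; linarith
  -- finite sums of squared difference norms are ≤ s
  have hFd : ∀ F : Finset ℤ, ∑ j ∈ F, ‖v j - v (j+1)‖^2 ≤ s := by
    intro F
    have hle : ∑ j ∈ F, (‖v j - v (j+1)‖₊ : ℝ≥0∞) ^ 2 ≤ S := ENNReal.sum_le_tsum F
    have := ENNReal.toReal_mono hSfin hle
    rw [ENNReal.toReal_sum (fun a _ => by simp [ENNReal.pow_ne_top, ENNReal.coe_ne_top])] at this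
    simp only [ENNReal.toReal_pow, ENNReal.coe_toReal, coe_nnnorm] at this
    linarith [this, ENNReal.toReal_nonneg (a := S)]
  -- finite sums of squared norms are ≤ 1
  have hFv : ∀ F : Finset ℤ, ∑ j ∈ F, ‖v j‖^2 ≤ 1 := by
    intro F
    have hle : ∑ j ∈ F, (‖v j‖₊ : ℝ≥0∞) ^ 2 ≤ 1 :=
      le_trans (ENNReal.sum_le_tsum F) h1
    have := ENNReal.toReal_mono (by simp) hle
    rw [ENNReal.toReal_sum (fun a _ => by simp [ENNReal.pow_ne_top, ENNReal.coe_ne_top])] at this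
    simpa only [ENNReal.toReal_pow, ENNReal.coe_toReal, coe_nnnorm, ENNReal.toReal_one] using this
  -- telescoping
  have htelp : ∀ n : ℕ, v 0 - v (n:ℤ) = ∑ k ∈ range n, (v (k:ℤ) - v ((k:ℤ)+1)) := by
    intro n
    induction n with
    | zero => simp
    | succ m ih =>
        rw [Finset.sum_range_succ, ← ih]
        push_cast
        abel
  have htelm : ∀ n : ℕ, v 0 - v (-(n:ℤ)) = -∑ k ∈ range n, (v (-(k:ℤ)-1) - v ((-(k:ℤ)-1)+1)) := by
    intro n
    induction n with
    | zero => simp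
    | succ m ih =>
        rw [Finset.sum_range_succ, neg_add]
        rw [← ih]
        have : (-(m:ℤ)-1) + 1 = -(m:ℤ) := by ring
        rw [this]
        push_cast
        have : (-(↑m + 1) : ℤ) = -(m:ℤ) - 1 := by ring
        rw [this]
        abel
  -- Cauchy-Schwarz consequence
  have hCS : ∀ (n : ℕ) (e : ℕ → ℤ), Set.InjOn e (range n) →
      (∑ k ∈ range n, ‖v (e k) - v (e k + 1)‖)^2 ≤ n * s := by
    intro n e he
    have h1' : (∑ k ∈ range n, ‖v (e k) - v (e k + 1)‖)^2
        ≤ (range n).card * ∑ k ∈ range n, ‖v (e k) - v (e k + 1)‖^2 :=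
      sq_sum_le_card_mul_sum_sq
    have h2' : ∑ k ∈ range n, ‖v (e k) - v (e k + 1)‖^2
        = ∑ j ∈ (range n).image e, ‖v j - v (j+1)‖^2 :=
      (Finset.sum_image (f := fun j => ‖v j - v (j+1)‖^2) (fun a ha b hb hab => he ha hb hab)).symm
    have h3' := hFd ((range n).image e)
    rw [Finset.card_range] at h1'
    have hn : (0:ℝ) ≤ n := Nat.cast_nonneg n
    calc (∑ k ∈ range n, ‖v (e k) - v (e k + 1)‖)^2
        ≤ n * ∑ k ∈ range n, ‖v (e k) - v (e k + 1)‖^2 := h1'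
      _ ≤ n * s := by rw [h2']; exact mul_le_mul_of_nonneg_left h3' hn
  -- bound on ‖v 0 - v j‖²
  have hub : ∀ j : ℤ, ‖v 0 - v j‖^2 ≤ (j.natAbs : ℝ) * s := by
    intro j
    obtain ⟨n, rfl | rfl⟩ := Int.eq_nat_or_neg j
    · have hnorm : ‖v 0 - v (n:ℤ)‖ ≤ ∑ k ∈ range n, ‖v (k:ℤ) - v ((k:ℤ)+1)‖ := by
        rw [htelp n]; exact norm_sum_le _ _
      have hcs := hCS n (fun k => (k:ℤ)) (fun a _ b _ hab => by simpa using hab)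
      simp only [Int.natAbs_natCast]
      calc ‖v 0 - v (n:ℤ)‖^2 ≤ (∑ k ∈ range n, ‖v (k:ℤ) - v ((k:ℤ)+1)‖)^2 :=
            pow_le_pow_left₀ (norm_nonneg _) hnorm 2
        _ ≤ n * s := hcs
    · have hnorm : ‖v 0 - v (-(n:ℤ))‖ ≤ ∑ k ∈ range n, ‖v (-(k:ℤ)-1) - v ((-(k:ℤ)-1)+1)‖ := by
        rw [htelm n, norm_neg]; exact norm_sum_le _ _
      have hcs := hCS n (fun k => -(k:ℤ)-1) (fun a _ b _ hab => by simpa using hab)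
      simp only [Int.natAbs_neg, Int.natAbs_natCast]
      calc ‖v 0 - v (-(n:ℤ))‖^2 ≤ (∑ k ∈ range n, ‖v (-(k:ℤ)-1) - v ((-(k:ℤ)-1)+1)‖)^2 :=
            pow_le_pow_left₀ (norm_nonneg _) hnorm 2
        _ ≤ n * s := hcs
  -- lower bound on ‖v j‖
  have hterm : ∀ j : ℤ, c - Real.sqrt ((j.natAbs:ℝ) * s) ≤ ‖v j‖ := by
    intro j
    have h0 : ‖v 0 - v j‖ ≤ Real.sqrt ((j.natAbs:ℝ) * s) :=
      Real.le_sqrt_of_sq_le (hub j)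
    have : ‖v 0‖ ≤ ‖v j‖ + ‖v 0 - v j‖ := by
      calc ‖v 0‖ = ‖v j + (v 0 - v j)‖ := by rw [add_sub_cancel]
        _ ≤ ‖v j‖ + ‖v 0 - v j‖ := norm_add_le _ _
    linarith
  -- setup N, t, u, r, Q
  set N : ℕ := ⌊c^2 / s⌋₊ with hN
  have hNle : (N:ℝ) * s ≤ c^2 := by
    have := Nat.floor_le (a := c^2/s) (by positivity)
    calc (N:ℝ) * s ≤ (c^2/s) * s := by
          exact mul_le_mul_of_nonneg_right this hs0.le
      _ = c^2 := by field_simp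
  have hNgt : c^2 < ((N:ℝ)+1) * s := by
    have := Nat.lt_floor_add_one (c^2/s)
    calc c^2 = (c^2/s) * s := by field_simp
      _ < ((N:ℝ)+1) * s := by exact mul_lt_mul_of_pos_right this hs0
  set t : ℝ := Real.sqrt s with ht
  have ht0 : 0 < t := Real.sqrt_pos.2 hs0
  have ht2 : t^2 = s := Real.sq_sqrt hs0.le
  set u : ℝ := Real.sqrt N with hu
  have hu0 : 0 ≤ u := Real.sqrt_nonneg _
  have hu2 : u^2 = (N:ℝ) := Real.sq_sqrt (Nat.cast_nonneg N)
  set Q : ℝ := ∑ k ∈ range (N+1), Real.sqrt k with hQdef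
  have hQ0 : 0 ≤ Q := Finset.sum_nonneg fun _ _ => Real.sqrt_nonneg _
  have hQ : Q ≤ (2/3)*u^2*u + u/2 := by
    have := sqrt_sum_bound N
    rw [hu2]; rw [hu]; linarith
  -- main inequality
  have hG : ∀ j ∈ Finset.Icc (-(N:ℤ)) N,
      (c - Real.sqrt ((j.natAbs:ℝ) * s))^2 ≤ ‖v j‖^2 := by
    intro j hj
    simp only [Finset.mem_Icc] at hj
    have habs : (j.natAbs : ℝ) ≤ (N:ℝ) := by
      have : j.natAbs ≤ N := by omega
      exact_mod_cast this
    have hsq : Real.sqrt ((j.natAbs:ℝ) * s) ≤ c := by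
      rw [show c = Real.sqrt (c^2) from (Real.sqrt_sq hc0.le).symm]
      apply Real.sqrt_le_sqrt
      calc (j.natAbs:ℝ) * s ≤ (N:ℝ) * s := mul_le_mul_of_nonneg_right habs hs0.le
        _ ≤ c^2 := hNle
    exact pow_le_pow_left₀ (by linarith) (hterm j) 2
  have hmain1 : ∑ j ∈ Finset.Icc (-(N:ℤ)) N, (c - Real.sqrt ((j.natAbs:ℝ) * s))^2 ≤ 1 :=
    le_trans (Finset.sum_le_sum hG) (hFv _)
  rw [sum_Icc_abs (fun k => (c - Real.sqrt ((k:ℝ) * s))^2) N] at hmain1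
  have hzero : (c - Real.sqrt (((0:ℕ):ℝ) * s))^2 = c^2 := by norm_num
  -- expand the range sum
  have hexp : ∑ k ∈ range (N+1), (c - Real.sqrt ((k:ℝ) * s))^2
      = ((N:ℝ)+1)*c^2 - 2*c*t*Q + t^2*((N:ℝ)*((N:ℝ)+1)/2) := by
    have hterm_eq : ∀ k ∈ range (N+1),
        (c - Real.sqrt ((k:ℝ) * s))^2 = c^2 - 2*c*t*Real.sqrt k + t^2*(k:ℝ) := by
      intro k _
      rw [Real.sqrt_mul (Nat.cast_nonneg k) s, ← ht]
      have hsq : (Real.sqrt k)^2 = (k:ℝ) := Real.sq_sqrt (Nat.cast_nonneg k)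
      linear_combination t^2 * hsq
    rw [Finset.sum_congr rfl hterm_eq]
    rw [Finset.sum_add_distrib, Finset.sum_sub_distrib, Finset.sum_const, Finset.card_range,
      ← Finset.mul_sum, ← Finset.mul_sum, ← hQdef]
    have hgauss : ∑ k ∈ range (N+1), (k:ℝ) = (N:ℝ)*((N:ℝ)+1)/2 := by
      have h := Finset.sum_range_id_mul_two (N+1)
      have h' : ((∑ k ∈ range (N+1), k : ℕ) : ℝ) * 2 = ((N:ℝ)+1) * (N:ℝ) := by
        exact_mod_cast congrArg (Nat.cast : ℕ → ℝ) h
      rw [← Nat.cast_sum]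
      linarith
    rw [hgauss]
    push_cast
    ring
  have hmain : 2*((u^2+1)*c^2 - 2*c*t*Q + t^2*(u^2*(u^2+1)/2)) - c^2 ≤ 1 := by
    rw [hu2]
    rw [hexp, hzero] at hmain1
    linarith
  exact endgameB c t u Q hc0 hc1 ht0 hu0
    (by rw [ht2, hu2]; linarith [hNle])
    (by rw [ht2, hu2]; linarith [hNgt])
    (by rw [ht2]; exact (lt_div_iff₀ (by positivity)).1 hsτ)
    hQ0 hQ hmain
end

section
/- Let 0 < c ≤ 1, let ε > 0 satisfy ε² = c⁴/(3 + 18c²), and let N be a natural number such that (N+1)ε² ≤ c² < (N+2)ε². Then ∑_{n=−N}^{N} (c − ε√|n|)² > 1. -/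
/-!
Folding the symmetric sum onto `n ≥ 1` and comparing `∑_{k ≤ N} √k` with `∫_0^{N+1} √t dt`
gives the lower bound `(2N+1)c² + N(N+1)ε² − (8/3)cε(N+1)^{3/2}`. Put `M = N + 1`. Since
`Mε² ≤ c²` we have `cε√M ≤ c²`, and the bound is at least `Mc²/3 − 3c²`; since
`(M+1)ε² > c²` this exceeds `c⁴/(3ε²) − (10/3)c² = 1 + (8/3)c²`.
-/

open Finset

lemma sum_Icc_neg_eq_of_even {M : Type*} [AddCommMonoid M] (f : ℤ → M)
    (hf : ∀ n, f (-n) = f n) (N : ℕ) :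
    ∑ n ∈ Icc (-(N : ℤ)) N, f n = f 0 + 2 • ∑ k ∈ range N, f (k + 1) := by
  induction N with
  | zero => simp
  | succ N ih =>
    have hIcc : Icc (-((N : ℤ) + 1)) ((N : ℤ) + 1)
        = insert (-((N : ℤ) + 1)) (insert ((N : ℤ) + 1) (Icc (-(N : ℤ)) N)) := by
      ext n
      simp only [mem_Icc, mem_insert]
      omega
    have hneg : -((N : ℤ) + 1) ∉ insert ((N : ℤ) + 1) (Icc (-(N : ℤ)) N) := by
      simp only [mem_Icc, mem_insert]
      omega
    have hpos : (N : ℤ) + 1 ∉ Icc (-(N : ℤ)) N := by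
      simp only [mem_Icc]
      omega
    push_cast
    rw [hIcc, sum_insert hneg, sum_insert hpos, ih, sum_range_succ, hf, smul_add, two_smul]
    abel

lemma sum_range_natCast_add_one (N : ℕ) : ∑ k ∈ range N, ((k : ℝ) + 1) = N * (N + 1) / 2 := by
  induction N with
  | zero => simp
  | succ N ih =>
    rw [sum_range_succ, ih]
    push_cast
    ring

-- `√x ≤ ∫_x^{x+1} √t dt`
lemma sqrt_add_two_thirds_mul_sqrt_le {x : ℝ} (hx : 0 ≤ x) :
    √x + 2 / 3 * (x * √x) ≤ 2 / 3 * ((x + 1) * √(x + 1)) := by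
  set a := √x
  set b := √(x + 1)
  have ha2 : a ^ 2 = x := Real.sq_sqrt hx
  have hb2 : b ^ 2 = x + 1 := Real.sq_sqrt (by linarith)
  have ha0 : 0 ≤ a := Real.sqrt_nonneg _
  have hb0 : 0 ≤ b := Real.sqrt_nonneg _
  nlinarith [sq_nonneg (2 * b * (x + 1) - (2 * a ^ 3 + 3 * a)), mul_nonneg hb0 (sq_nonneg a),
    mul_nonneg ha0 (sq_nonneg a), mul_nonneg (mul_nonneg hb0 hb0) hb0, sq_nonneg (b - a)]

lemma sum_sqrt_succ_le (N : ℕ) :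
    ∑ k ∈ range N, √((k : ℝ) + 1) ≤ 2 / 3 * ((N + 1) * √(N + 1)) := by
  induction N with
  | zero => norm_num
  | succ N ih =>
    rw [sum_range_succ]
    have := sqrt_add_two_thirds_mul_sqrt_le (x := (N : ℝ) + 1) (by positivity)
    push_cast
    linarith

lemma sum_Icc_sq_sub_mul_sqrt_abs_ge {c ε : ℝ} (hc : 0 ≤ c) (hε : 0 ≤ ε) (N : ℕ) :
    (2 * N + 1) * c ^ 2 + N * (N + 1) * ε ^ 2 - 8 / 3 * c * ε * ((N + 1) * √(N + 1))
      ≤ ∑ n ∈ Icc (-(N : ℤ)) N, (c - ε * √|(n : ℝ)|) ^ 2 := by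
  have hsummand (k : ℕ) : (c - ε * √|((k + 1 : ℤ) : ℝ)|) ^ 2
      = c ^ 2 - 2 * c * ε * √((k : ℝ) + 1) + ε ^ 2 * ((k : ℝ) + 1) := by
    have hk : |((k + 1 : ℤ) : ℝ)| = (k : ℝ) + 1 := by
      push_cast
      exact abs_of_nonneg (by positivity)
    rw [hk, sub_sq, mul_pow, Real.sq_sqrt (by positivity)]
    ring
  rw [sum_Icc_neg_eq_of_even (fun n : ℤ ↦ (c - ε * √|(n : ℝ)|) ^ 2)
    (fun n ↦ by rw [Int.cast_neg, abs_neg]), sum_congr rfl fun k _ ↦ hsummand k,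
    sum_add_distrib, sum_sub_distrib, ← mul_sum, ← mul_sum, sum_range_natCast_add_one, sum_const,
    card_range, nsmul_eq_mul]
  have hS := mul_le_mul_of_nonneg_left (sum_sqrt_succ_le N) (mul_nonneg hc hε)
  simp only [Int.cast_zero, abs_zero, Real.sqrt_zero, mul_zero, sub_zero, nsmul_eq_mul]
  push_cast
  linarith

theorem stmt5_general (c ε : ℝ) (hc0 : 0 < c) (hε : 0 < ε)
    (hε2 : ε ^ 2 = c ^ 4 / (3 + 18 * c ^ 2)) (N : ℕ)
    (hN1 : ((N : ℝ) + 1) * ε ^ 2 ≤ c ^ 2) (hN2 : c ^ 2 < ((N : ℝ) + 2) * ε ^ 2) :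
    1 < ∑ n ∈ Finset.Icc (-(N : ℤ)) (N : ℤ), (c - ε * Real.sqrt |(n : ℝ)|) ^ 2 := by
  refine lt_of_lt_of_le ?_ (sum_Icc_sq_sub_mul_sqrt_abs_ge hc0.le hε.le N)
  set M : ℝ := N + 1 with hM
  have hεt : ε * √M ≤ c := by
    rw [← Real.sqrt_sq hc0.le, ← Real.sqrt_sq hε.le, ← Real.sqrt_mul (sq_nonneg ε)]
    exact Real.sqrt_le_sqrt (by linarith)
  have hMc : 3 + 17 * c ^ 2 < M * c ^ 2 := by
    have hc4 : c ^ 4 = ε ^ 2 * (3 + 18 * c ^ 2) := by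
      rw [hε2]
      field_simp
    have : ε ^ 2 * (3 + 18 * c ^ 2) < ε ^ 2 * ((M + 1) * c ^ 2) := by
      rw [← hc4]
      nlinarith [mul_lt_mul_of_pos_left hN2 (pow_pos hc0 2)]
    linarith [lt_of_mul_lt_mul_left this (sq_nonneg ε)]
  have hMM : M * c ^ 2 - 2 * c ^ 2 ≤ N * M * ε ^ 2 := by
    nlinarith [mul_le_mul_of_nonneg_left (show c ^ 2 - ε ^ 2 ≤ M * ε ^ 2 by linarith)
      (show 0 ≤ M by positivity)]
  have hcεt := mul_le_mul_of_nonneg_left (mul_le_mul_of_nonneg_left hεt hc0.le)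
    (show 0 ≤ M by positivity)
  calc 1 < M * c ^ 2 / 3 - 3 * c ^ 2 := by linarith [sq_nonneg c]
    _ ≤ _ := by rw [hM] at hMM hcεt ⊢; linarith

/-- Concluding numerical estimate in the proof of Lemma 6.2. -/
theorem stmt5 (c ε : ℝ) (hc0 : 0 < c) (hc1 : c ≤ 1) (hε : 0 < ε)
    (hε2 : ε ^ 2 = c ^ 4 / (3 + 18 * c ^ 2)) (N : ℕ)
    (hN1 : ((N : ℝ) + 1) * ε ^ 2 ≤ c ^ 2) (hN2 : c ^ 2 < ((N : ℝ) + 2) * ε ^ 2) :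
    1 < ∑ n ∈ Finset.Icc (-(N : ℤ)) (N : ℤ), (c - ε * Real.sqrt |(n : ℝ)|) ^ 2 :=
  stmt5_general c ε hc0 hε hε2 N hN1 hN2
end

section
/- For every 0 < c ≤ 1 there exists a family (a_j)_{j∈ℤ} of nonnegative real numbers such that a_0 = c, ∑_{j∈ℤ} a_j² ≤ 1, only finitely many a_j are nonzero, and ∑_{j∈ℤ} (a_j − a_{j+1})² ≤ 8c⁴. -/
/-!
The witness is a tent of height `c` and half-width `N`, `a j = (c / N) * (N - |j|)⁺`.
Since `a j ≤ c` and the tent has area `c N`, we get `∑ a j ^ 2 ≤ c ^ 2 N`, while its `2N`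
consecutive differences all equal `± c / N`, so `∑ (a j - a (j + 1)) ^ 2 = 2 c ^ 2 / N`.
Both requirements `c ^ 2 N ≤ 1` and `2 c ^ 2 / N ≤ 8 c ^ 4` hold for `N = ⌊c⁻²⌋`, because
`c ≤ 1` gives `N ≥ 1` and hence `N ≤ c⁻² < N + 1 ≤ 2N`.
-/

open Finset

theorem hasSum_boole_mem {ι R : Type*} [DecidableEq ι] [AddCommMonoidWithOne R]
    [TopologicalSpace R] (s : Finset ι) : HasSum (fun i => if i ∈ s then (1 : R) else 0) #s := by
  simpa [sum_boole] using
    hasSum_sum_of_ne_finset_zero (s := s) (f := fun i => if i ∈ s then (1 : R) else 0)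
      (fun i hi => if_neg hi)

/-- Truncated subtraction in `ℕ` makes this the tent `(N - |j|)⁺`. -/
def tent (N : ℕ) (j : ℤ) : ℕ := N - j.natAbs

section Tent

variable (N : ℕ) (j : ℤ)

theorem tent_zero : tent N 0 = N := by simp [tent]

theorem tent_le : tent N j ≤ N := Nat.sub_le _ _

theorem support_tent_subset : Function.support (tent N) ⊆ Set.Ioo (-(N : ℤ)) N := by
  intro j hj
  simp only [Function.mem_support, tent, Set.mem_Ioo] at hj ⊢
  omega

theorem tent_succ : (tent (N + 1) j : ℝ) = tent N j + if j ∈ Icc (-(N : ℤ)) N then 1 else 0 := by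
  split_ifs with hj <;> simp only [mem_Icc] at hj <;> norm_cast <;> simp only [tent] <;> omega

theorem hasSum_tent : HasSum (fun j => (tent N j : ℝ)) ((N : ℝ) ^ 2) := by
  induction N with
  | zero => simp [tent, hasSum_zero]
  | succ N ih =>
    have hcard : #(Icc (-(N : ℤ)) N) = 2 * N + 1 := by rw [Int.card_Icc]; omega
    have h := ih.add (hasSum_boole_mem (R := ℝ) (Icc (-(N : ℤ)) N))
    rw [hcard] at h
    convert h using 1
    · exact funext (tent_succ N)
    · push_cast; ring

theorem tent_sub_tent_succ_sq :
    ((tent N j : ℝ) - tent N (j + 1)) ^ 2 = if j ∈ Ico (-(N : ℤ)) N then 1 else 0 := by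
  suffices h : ((tent N j : ℤ) - tent N (j + 1)) ^ 2 = if j ∈ Ico (-(N : ℤ)) N then 1 else 0 by
    exact_mod_cast h
  split_ifs with hj
  · have hstep : (tent N j : ℤ) - tent N (j + 1) = 1 ∨ (tent N j : ℤ) - tent N (j + 1) = -1 := by
      simp only [mem_Ico] at hj; simp only [tent]; omega
    rcases hstep with h | h <;> rw [h] <;> norm_num
  · have hflat : (tent N j : ℤ) = tent N (j + 1) := by
      simp only [mem_Ico] at hj; simp only [tent]; omega
    simp [hflat]

theorem hasSum_tent_sub_tent_succ_sq :
    HasSum (fun j => ((tent N j : ℝ) - tent N (j + 1)) ^ 2) (2 * N) := by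
  have hcard : #(Ico (-(N : ℤ)) N) = 2 * N := by rw [Int.card_Ico]; omega
  simpa [tent_sub_tent_succ_sq, hcard] using hasSum_boole_mem (R := ℝ) (Ico (-(N : ℤ)) N)

end Tent

section ScaledTent

variable (c : ℝ) {N : ℕ}

theorem support_scaled_tent_finite : (Function.support fun j => c / N * tent N j).Finite := by
  refine (Set.finite_Ioo (-(N : ℤ)) N).subset fun j hj => ?_
  refine support_tent_subset N ?_
  simp only [Function.mem_support, ne_eq, mul_eq_zero, Nat.cast_eq_zero, not_or] at hj ⊢
  exact hj.2

theorem tsum_scaled_tent_sq_le (hN : 0 < N) : ∑' j, (c / N * tent N j) ^ 2 ≤ c ^ 2 * N := by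
  have hNpos : (0 : ℝ) < N := by exact_mod_cast hN
  have hdom : ∀ j, (c / N * tent N j) ^ 2 ≤ c ^ 2 / N * tent N j := fun j => by
    have ht : (tent N j : ℝ) ≤ N := by exact_mod_cast tent_le N j
    calc (c / N * tent N j) ^ 2 = c ^ 2 / N ^ 2 * tent N j * tent N j := by ring
      _ ≤ c ^ 2 / N ^ 2 * N * tent N j := by gcongr
      _ = c ^ 2 / N * tent N j := by field_simp
  have hsum := (hasSum_tent N).mul_left (c ^ 2 / N)
  calc ∑' j, (c / N * tent N j) ^ 2 ≤ ∑' j, c ^ 2 / N * tent N j :=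
        (hsum.summable.of_nonneg_of_le (fun j => sq_nonneg _) hdom).tsum_le_tsum hdom
          hsum.summable
    _ = c ^ 2 * N := by rw [hsum.tsum_eq]; field_simp

theorem tsum_scaled_tent_sub_succ_sq :
    ∑' j, (c / N * tent N j - c / N * tent N (j + 1)) ^ 2 = 2 * c ^ 2 / N := by
  have h := (hasSum_tent_sub_tent_succ_sq N).mul_left ((c / N) ^ 2)
  simp only [← mul_pow, mul_sub] at h
  rw [h.tsum_eq]
  rcases N.eq_zero_or_pos with rfl | hN
  · simp
  · field_simp

end ScaledTent

/-- The order `c⁴` of the lower bound of Lemma 6.2 is tight (Remark 6.3). -/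
theorem stmt6 (c : ℝ) (hc0 : 0 < c) (hc1 : c ≤ 1) :
    ∃ a : ℤ → ℝ, (∀ j, 0 ≤ a j) ∧ a 0 = c ∧ (∑' j : ℤ, a j ^ 2) ≤ 1 ∧
      (Function.support a).Finite ∧ (∑' j : ℤ, (a j - a (j + 1)) ^ 2) ≤ 8 * c ^ 4 := by
  set N := ⌊(c ^ 2)⁻¹⌋₊
  have hc2 : 0 < c ^ 2 := by positivity
  have hN : 1 ≤ N := Nat.one_le_floor_iff _ |>.mpr (one_le_inv_iff₀.mpr ⟨hc2, by nlinarith⟩)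
  have hNpos : (0 : ℝ) < N := by exact_mod_cast hN
  have hN_le : N * c ^ 2 ≤ 1 := by
    have h := mul_le_mul_of_nonneg_right (Nat.floor_le (inv_nonneg.mpr hc2.le)) hc2.le
    rwa [inv_mul_cancel₀ hc2.ne'] at h
  have hN_gt : 1 < 2 * N * c ^ 2 := by
    have h := mul_lt_mul_of_pos_right (Nat.lt_floor_add_one (c ^ 2)⁻¹) hc2
    rw [inv_mul_cancel₀ hc2.ne'] at h
    have hN' : (1 : ℝ) ≤ N := by exact_mod_cast hN
    nlinarith
  refine ⟨fun j => c / N * tent N j, fun j => by positivity, ?_, ?_,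
    support_scaled_tent_finite c, ?_⟩
  · simp only [tent_zero]; field_simp
  · exact (tsum_scaled_tent_sq_le c hN).trans (by linarith)
  · rw [tsum_scaled_tent_sub_succ_sq, div_le_iff₀ hNpos]
    nlinarith
end

section
/- Let U be a countably cofinal ultrafilter on a set S (i.e., there is a sequence (B_k)_{k∈ℕ} of sets in U with ⋂_{k∈ℕ} B_k = ∅), let V be an ultrafilter on a set T, and let (C_n)_{n∈ℕ} be a sequence of subsets of S×T such that for every n, the set { s ∈ S : { t ∈ T : (s,t) ∈ C_n } ∈ V } belongs to U. Then there exists a function g : S → T such that for every n ∈ ℕ, the set { s ∈ S : (s, g(s)) ∈ C_n } belongs to U. -/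
/-- Selection lemma: combinatorial core of (2) ⟹ (1) in Proposition 3.12. -/
theorem stmt10 {S T : Type*} (U : Ultrafilter S)
    (hcc : ∃ B : ℕ → Set S, (∀ k, B k ∈ U) ∧ (⋂ k, B k) = ∅)
    (V : Ultrafilter T) (C : ℕ → Set (S × T))
    (hC : ∀ n, {s : S | {t : T | (s, t) ∈ C n} ∈ V} ∈ U) :
    ∃ g : S → T, ∀ n, {s : S | (s, g s) ∈ C n} ∈ U := by
  obtain ⟨B, hB, hBempty⟩ := hcc
  set D : ℕ → Set S := fun n => {s : S | {t : T | (s, t) ∈ C n} ∈ V} with hD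
  set A : ℕ → Set S := fun n => ⋂ k ∈ Finset.range (n + 1), (B k ∩ D k) with hA
  have hAU : ∀ n, A n ∈ U := by
    intro n
    rw [hA]
    refine (Filter.biInter_finset_mem _).2 fun k _ => Filter.inter_mem (hB k) (hC k)
  have hAanti : ∀ {n m : ℕ}, n ≤ m → A m ⊆ A n := by
    intro n m hnm
    intro s hs
    refine Set.mem_iInter₂.2 fun k hk => ?_
    exact Set.mem_iInter₂.1 hs k (Finset.mem_range.2 (lt_of_lt_of_le (Finset.mem_range.1 hk) (by omega)))
  have hAD : ∀ n, A n ⊆ D n := by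
    intro n s hs
    have := Set.mem_iInter₂.1 hs n (Finset.mem_range.2 (Nat.lt_succ_self n))
    exact this.2
  -- key claim
  have key : ∀ s : S, ∃ t : T, ∀ k, s ∈ A k → (s, t) ∈ C k := by
    intro s
    -- find n with s ∉ A n
    have : ∃ n, s ∉ A n := by
      by_contra h
      push_neg at h
      have hs : s ∈ ⋂ k, B k := Set.mem_iInter.2 fun k =>
        (Set.mem_iInter₂.1 (h k) k (Finset.mem_range.2 (Nat.lt_succ_self k))).1
      rw [hBempty] at hs
      exact hs
    obtain ⟨n, hn⟩ := this
    have hW : (⋂ k ∈ Finset.range n, {t : T | s ∈ A k → (s, t) ∈ C k}) ∈ V := by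
      refine (Filter.biInter_finset_mem _).2 fun k _ => ?_
      by_cases hsk : s ∈ A k
      · have : {t : T | (s, t) ∈ C k} ∈ V := hAD k hsk
        exact Filter.mem_of_superset this fun t ht _ => ht
      · have : {t : T | s ∈ A k → (s, t) ∈ C k} = Set.univ := by
          ext t; simp [hsk]
        rw [this]; exact Filter.univ_mem
    obtain ⟨t, ht⟩ := Filter.nonempty_of_mem hW
    refine ⟨t, fun k hk => ?_⟩
    have hkn : k < n := by
      by_contra h
      push_neg at h
      exact hn (hAanti h hk)
    exact Set.mem_iInter₂.1 ht k (Finset.mem_range.2 hkn) hk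
  refine ⟨fun s => (key s).choose, fun n => ?_⟩
  refine Filter.mem_of_superset (hAU n) fun s hs => ?_
  exact (key s).choose_spec n hs
end

section
/- Let f : [0,1] → ℝ be a Lebesgue-measurable function and let ε > 0. Then there exists δ with 0 ≤ δ < ε such that for every t ∈ ℝ, the set { x ∈ [0,1] : f(x) + δ·x = t } has Lebesgue measure zero. -/
/-!
If some level set of `g + δ₁ h` and some level set of `g + δ₂ h` with `δ₁ ≠ δ₂` met in a set of
positive measure, `h` would be constant there. So, when the level sets of `h` are null, the
positive-measure level sets chosen for different bad `δ` are almost disjoint, and in an s-finite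
measure space only countably many such sets exist. A countable set of `δ` cannot fill `[0, ε)`.
-/

open MeasureTheory

variable {α : Type*} [MeasurableSpace α] {μ : Measure α}

theorem aedisjoint_setOf_add_mul_eq {g h : α → ℝ} (hh : ∀ c, μ {x | h x = c} = 0)
    {δ₁ δ₂ : ℝ} (hδ : δ₁ ≠ δ₂) (t₁ t₂ : ℝ) :
    AEDisjoint μ {x | g x + δ₁ * h x = t₁} {x | g x + δ₂ * h x = t₂} := by
  refine measure_mono_null ?_ (hh ((t₁ - t₂) / (δ₁ - δ₂)))
  rintro x ⟨hx₁, hx₂⟩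
  rw [Set.mem_ofPred_eq] at hx₁ hx₂ ⊢
  rw [eq_div_iff (sub_ne_zero.2 hδ)]
  linarith

theorem countable_setOf_exists_measure_setOf_add_mul_eq_pos [SFinite μ] {g h : α → ℝ}
    (hg : Measurable g) (hh_meas : Measurable h) (hh : ∀ c, μ {x | h x = c} = 0) :
    {δ : ℝ | ∃ t, 0 < μ {x | g x + δ * h x = t}}.Countable := by
  set S := {δ : ℝ | ∃ t, 0 < μ {x | g x + δ * h x = t}}
  choose t ht using fun δ : S => δ.2
  have hcount := Measure.countable_meas_pos_of_disjoint_iUnion₀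
    (As := fun δ : S => {x | g x + δ * h x = t δ})
    (fun δ => ((hg.add (hh_meas.const_mul δ)) (measurableSet_singleton (t δ))).nullMeasurableSet)
    (fun δ₁ δ₂ hne => aedisjoint_setOf_add_mul_eq hh (Subtype.coe_injective.ne hne) _ _)
  simp only [ht, Set.ofPred_true, Set.countable_univ_iff] at hcount
  exact Set.countable_coe_iff.1 hcount

/-- Claim inside the proof of Lemma 3.3: some perturbation `f + δ·id` has all level sets null. -/
theorem stmt11 (f : Set.Icc (0 : ℝ) 1 → ℝ) (hf : Measurable f) (ε : ℝ) (hε : 0 < ε) :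
    ∃ δ : ℝ, 0 ≤ δ ∧ δ < ε ∧ ∀ t : ℝ,
      volume {x : Set.Icc (0 : ℝ) 1 | f x + δ * (x : ℝ) = t} = 0 := by
  have hcoe : ∀ c : ℝ, volume {x : Set.Icc (0 : ℝ) 1 | (x : ℝ) = c} = 0 := fun c =>
    Set.Subsingleton.measure_zero (fun x hx y hy => Subtype.ext (hx.trans hy.symm)) _
  have hbad := countable_setOf_exists_measure_setOf_add_mul_eq_pos hf measurable_subtype_coe hcoe
  obtain ⟨δ, hδ, hδ₀, hδε⟩ := (hbad.dense_compl ℝ).exists_between hε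
  exact ⟨δ, hδ₀.le, hδε, fun t => nonpos_iff_eq_zero.1 (not_lt.1 fun hpos => hδ ⟨t, hpos⟩)⟩
end
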